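/- arXiv:math/0404366 — 5 statements merged into one kernel-verified Lean document; each statement's English description precedes it below -/
import Mathlib

section
/- Let d be a polynomial derivation on k[x_1,...,x_n] over a field k, and let F, G be nonzero coprime polynomials. The rational function F/G is a constant of the derivation (d(F/G) = 0, where d is extended to k(x) by the quotient rule) if and only if there exists a polynomial P ∈ k[x_1,...,x_n] with d(F) = P·F and d(G) = P·G. -/
open MvPolynomial

/-- For nonzero coprime polynomials `F, G`, the rational function `F/G` is a constant
of the derivation `d` (the extension of `d` by the quotient rule gives
`d(F/G) = (dF·G − F·dG)/G²`, which vanishes iff `dF·G − F·dG = 0`) iff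
`d(F) = P·F` and `d(G) = P·G` for some polynomial `P`. -/
theorem statement4 {k : Type*} [Field k] {n : ℕ}
    (d : Derivation k (MvPolynomial (Fin n) k) (MvPolynomial (Fin n) k))
    (F G : MvPolynomial (Fin n) k) (hF : F ≠ 0) (hG : G ≠ 0)
    (hcop : IsRelPrime F G) :
    d F * G - F * d G = 0 ↔
      ∃ P : MvPolynomial (Fin n) k, d F = P * F ∧ d G = P * G := by
  constructor
  · intro h
    have heq : d F * G = F * d G := by linear_combination h
    have hdvd : F ∣ d F * G := ⟨d G, heq⟩
    obtain ⟨P, hP⟩ := hcop.dvd_of_dvd_mul_right (by rwa [mul_comm] at hdvd)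
    rw [mul_comm] at hP
    refine ⟨P, hP, ?_⟩
    have : F * (P * G) = F * d G := by rw [← heq, hP]; ring
    exact (mul_left_cancel₀ hF this).symm
  · rintro ⟨P, h1, h2⟩
    rw [h1, h2]; ring
end

section
/- Let d_v be a polynomial derivation on k[x_1,...,x_n], γ a direction, and write d_v = Σ_l d_{v^{(γ,l)}} as a finite sum of γ-homogeneous derivations, with d_v^+ the component of maximal γ-degree. If F is a Darboux polynomial of d_v with cofactor Λ, then d_v^+(F^+) = Λ^+ F^+, where F^+ and Λ^+ denote the highest γ-degree homogeneous components of F and Λ respectively (interpreting Λ^+ as the component of Λ in γ-degree equal to the γ-degree of d_v^+, which is zero if Λ has no such component). -/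
open MvPolynomial

section Aux

variable {k : Type*} [Field k] {n : ℕ} (γ : Fin n → ℤ)

private lemma aux_coeff_pderiv (i : Fin n) (p : MvPolynomial (Fin n) k) (d : Fin n →₀ ℕ) :
    coeff d (pderiv i p) = ((d i : k) + 1) * coeff (d + Finsupp.single i 1) p := by
  induction p using MvPolynomial.induction_on' with
  | add p q hp hq => simp [hp, hq, mul_add]
  | monomial s a =>
    rw [pderiv_monomial, coeff_monomial, coeff_monomial]
    by_cases h : s = d + Finsupp.single i 1
    · have hsub : s - Finsupp.single i 1 = d := by
        rw [h]; exact add_tsub_cancel_right _ _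
      have hsi : s i = d i + 1 := by
        rw [h]; simp
      rw [if_pos hsub, if_pos h, hsi]
      push_cast
      ring
    · rw [if_neg h, mul_zero]
      by_cases h2 : s - Finsupp.single i 1 = d
      · rw [if_pos h2]
        have hsi : s i = 0 := by
          by_contra h0
          apply h
          rw [← h2, tsub_add_cancel_of_le]
          intro j
          by_cases hj : j = i
          · subst hj; simp; omega
          · simp [Finsupp.single_apply, (Ne.symm hj : i ≠ j)]
        simp [hsi]
      · rw [if_neg h2]

private lemma aux_coeff_zero {P : MvPolynomial (Fin n) k} {a : ℤ}
    (h : ∀ l : ℤ, a < l → weightedHomogeneousComponent γ l P = 0) :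
    ∀ d, coeff d P ≠ 0 → Finsupp.weight γ d ≤ a := by
  intro d hd
  by_contra hlt
  push_neg at hlt
  have h0 := h _ hlt
  have h1 := coeff_weightedHomogeneousComponent (w := γ) (Finsupp.weight γ d) P d
  rw [h0, if_pos rfl] at h1
  exact hd h1.symm

private lemma aux_comp_zero {P : MvPolynomial (Fin n) k} {a : ℤ}
    (hb : ∀ d, coeff d P ≠ 0 → Finsupp.weight γ d ≤ a) {m : ℤ} (hm : a < m) :
    weightedHomogeneousComponent γ m P = 0 := by
  ext d
  rw [coeff_weightedHomogeneousComponent, coeff_zero]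
  split_ifs with h
  · by_contra hc
    exact absurd (h ▸ hb d hc) (not_le.2 hm)
  · rfl

private lemma aux_mul_comp {P Q : MvPolynomial (Fin n) k} {a b : ℤ}
    (hP : ∀ d, coeff d P ≠ 0 → Finsupp.weight γ d ≤ a)
    (hQ : ∀ d, coeff d Q ≠ 0 → Finsupp.weight γ d ≤ b) :
    weightedHomogeneousComponent γ (a + b) (P * Q) =
      weightedHomogeneousComponent γ a P * weightedHomogeneousComponent γ b Q := by
  ext d
  rw [coeff_weightedHomogeneousComponent]
  split_ifs with h
  · rw [coeff_mul, coeff_mul]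
    apply Finset.sum_congr rfl
    intro x hx
    rw [Finset.HasAntidiagonal.mem_antidiagonal] at hx
    have hadd : Finsupp.weight γ x.1 + Finsupp.weight γ x.2 = a + b := by
      rw [← map_add, hx, h]
    rw [coeff_weightedHomogeneousComponent, coeff_weightedHomogeneousComponent]
    by_cases h1 : Finsupp.weight γ x.1 = a
    · rw [if_pos h1, if_pos (by omega)]
    · rw [if_neg h1]
      rcases lt_or_gt_of_ne h1 with hl | hg
      · have : coeff x.2 Q = 0 := by
          by_contra hc
          exact absurd (hQ _ hc) (by omega)
        simp [this]
      · have : coeff x.1 P = 0 := by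
          by_contra hc
          exact absurd (hP _ hc) (by omega)
        simp [this]
  · symm
    by_contra hc
    exact h (((weightedHomogeneousComponent_isWeightedHomogeneous a P).mul
      (weightedHomogeneousComponent_isWeightedHomogeneous b Q)) hc)

private lemma aux_mul_bound {P Q : MvPolynomial (Fin n) k} {a b : ℤ}
    (hP : ∀ d, coeff d P ≠ 0 → Finsupp.weight γ d ≤ a)
    (hQ : ∀ d, coeff d Q ≠ 0 → Finsupp.weight γ d ≤ b) :
    ∀ d, coeff d (P * Q) ≠ 0 → Finsupp.weight γ d ≤ a + b := by
  intro d hd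
  by_contra hlt
  push_neg at hlt
  apply hd
  rw [coeff_mul]
  apply Finset.sum_eq_zero
  intro x hx
  rw [Finset.HasAntidiagonal.mem_antidiagonal] at hx
  have hadd : Finsupp.weight γ x.1 + Finsupp.weight γ x.2 = Finsupp.weight γ d := by
    rw [← map_add, hx]
  by_cases h1 : coeff x.1 P = 0
  · rw [h1, zero_mul]
  · have := hP _ h1
    have h2 : coeff x.2 Q = 0 := by
      by_contra hc
      exact absurd (hQ _ hc) (by omega)
    rw [h2, mul_zero]

private lemma aux_weight_single (i : Fin n) :
    Finsupp.weight γ (Finsupp.single i 1) = γ i := by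
  rw [Finsupp.weight_apply, Finsupp.sum_single_index] <;> simp

private lemma aux_pderiv_comp (i : Fin n) (m : ℤ) (P : MvPolynomial (Fin n) k) :
    weightedHomogeneousComponent γ (m - γ i) (pderiv i P) =
      pderiv i (weightedHomogeneousComponent γ m P) := by
  ext d
  rw [coeff_weightedHomogeneousComponent, aux_coeff_pderiv, aux_coeff_pderiv,
    coeff_weightedHomogeneousComponent]
  have hw : Finsupp.weight γ (d + Finsupp.single i 1) = Finsupp.weight γ d + γ i := by
    rw [map_add, aux_weight_single]
  by_cases h : Finsupp.weight γ d = m - γ i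
  · rw [if_pos h, if_pos (by omega)]
  · rw [if_neg h, if_neg (by omega), mul_zero]

private lemma aux_pderiv_bound {P : MvPolynomial (Fin n) k} {a : ℤ}
    (hP : ∀ d, coeff d P ≠ 0 → Finsupp.weight γ d ≤ a) (i : Fin n) :
    ∀ d, coeff d (pderiv i P) ≠ 0 → Finsupp.weight γ d ≤ a - γ i := by
  intro d hd
  rw [aux_coeff_pderiv] at hd
  have h1 : coeff (d + Finsupp.single i 1) P ≠ 0 := fun h => hd (by rw [h, mul_zero])
  have := hP _ h1
  rw [map_add, aux_weight_single] at this
  omega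

end Aux

/-- Let `d_v(F) = Σ vᵢ ∂ᵢ F` be a polynomial derivation, decomposed into
`γ`-homogeneous parts; its part of `γ`-degree `l` is `F ↦ Σᵢ (vᵢ)_{l+γᵢ} ∂ᵢ F`,
where `(·)_m` is the `γ`-homogeneous component of degree `m`.  Let `r` be the
`γ`-degree of `d_v` (hypotheses `hr1`, `hr2`) and `dF` the `γ`-degree of `F`
(hypotheses `hdF1`, `hdF2`).  If `F` is a Darboux polynomial of `d_v` with cofactor
`Λ`, then `d_v⁺(F⁺) = Λ⁺ F⁺`, where `Λ⁺` is the component of `Λ` in degree `r`. -/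
theorem statement9 {k : Type*} [Field k] {n : ℕ}
    (v : Fin n → MvPolynomial (Fin n) k)
    (γ : Fin n → ℤ) (hγ : ∀ i, 0 < γ i)
    (F Λ : MvPolynomial (Fin n) k) (hF : F ≠ 0)
    (hDb : ∑ i, v i * pderiv i F = Λ * F)
    (r : ℤ)
    (hr1 : ∀ i, ∀ l : ℤ, r < l → weightedHomogeneousComponent γ (l + γ i) (v i) = 0)
    (hr2 : ∃ i, weightedHomogeneousComponent γ (r + γ i) (v i) ≠ 0)
    (dF : ℤ)
    (hdF1 : weightedHomogeneousComponent γ dF F ≠ 0)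
    (hdF2 : ∀ l : ℤ, dF < l → weightedHomogeneousComponent γ l F = 0) :
    ∑ i, weightedHomogeneousComponent γ (r + γ i) (v i)
        * pderiv i (weightedHomogeneousComponent γ dF F)
      = weightedHomogeneousComponent γ r Λ * weightedHomogeneousComponent γ dF F := by
  have bF : ∀ d, coeff d F ≠ 0 → Finsupp.weight γ d ≤ dF := aux_coeff_zero γ hdF2
  have bv : ∀ i, ∀ d, coeff d (v i) ≠ 0 → Finsupp.weight γ d ≤ r + γ i := by
    intro i
    apply aux_coeff_zero γ
    intro l hl
    have := hr1 i (l - γ i) (by omega)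
    rwa [show l - γ i + γ i = l by ring] at this
  -- Λ is bounded by r
  have bΛ : ∀ d, coeff d Λ ≠ 0 → Finsupp.weight γ d ≤ r := by
    by_contra hc
    push_neg at hc
    obtain ⟨d0, hd0, hr0⟩ := hc
    -- find a maximal-weight element among those above r
    set S := Λ.support.filter (fun d => r < Finsupp.weight γ d) with hS
    have hne : S.Nonempty := ⟨d0, by simp [hS, MvPolynomial.mem_support_iff, hd0, hr0]⟩
    obtain ⟨dm, hdm, hmax⟩ := S.exists_max_image (fun d => Finsupp.weight γ d) hne
    rw [hS, Finset.mem_filter, MvPolynomial.mem_support_iff] at hdm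
    set m := Finsupp.weight γ dm with hm
    have bΛ' : ∀ d, coeff d Λ ≠ 0 → Finsupp.weight γ d ≤ m := by
      intro d hd
      by_cases h : r < Finsupp.weight γ d
      · exact hmax d (by simp [hS, MvPolynomial.mem_support_iff, hd, h])
      · omega
    have hCm : weightedHomogeneousComponent γ m Λ ≠ 0 := by
      intro h
      have h1 := coeff_weightedHomogeneousComponent (w := γ) m Λ dm
      rw [h, if_pos rfl] at h1
      exact hdm.1 h1.symm
    have key := congrArg (weightedHomogeneousComponent γ (m + dF)) hDb
    rw [map_sum, aux_mul_comp γ bΛ' bF] at key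
    have hzero : ∀ i ∈ Finset.univ, weightedHomogeneousComponent γ (m + dF) (v i * pderiv i F) = 0 := by
      intro i _
      have hb := aux_mul_bound γ (bv i) (aux_pderiv_bound γ bF i)
      apply aux_comp_zero γ (a := r + γ i + (dF - γ i)) hb
      have : r < m := hdm.2
      omega
    rw [Finset.sum_eq_zero hzero] at key
    exact mul_ne_zero hCm hdF1 key.symm
  -- now extract the (r + dF)-component of the Darboux equation
  have key := congrArg (weightedHomogeneousComponent γ (r + dF)) hDb
  rw [map_sum, aux_mul_comp γ bΛ bF] at key
  rw [← key]
  apply Finset.sum_congr rfl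
  intro i _
  rw [show r + dF = (r + γ i) + (dF - γ i) by ring,
    aux_mul_comp γ (bv i) (aux_pderiv_bound γ bF i),
    aux_pderiv_comp]
end

section
/- Let H = (1/2)Σ_{i=1}^m μ_i p_i² + V(q) with V ∈ ℂ[q_1,...,q_m] of degree ≥ 2, and let d_H be the associated Hamiltonian derivation. If F ∈ ℂ[q,p] is a Darboux polynomial of d_H with cofactor Λ, then Λ depends only on q, i.e., Λ ∈ ℂ[q_1,...,q_m]. -/
open MvPolynomial

/-- Variables: `Sum.inl i` is `qᵢ`, `Sum.inr i` is `pᵢ`.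
The Hamiltonian derivation of `H = (1/2)Σ μᵢ pᵢ² + V(q)`:
`d_H(F) = Σᵢ (μᵢ pᵢ ∂F/∂qᵢ − (∂V/∂qᵢ) ∂F/∂pᵢ)`. -/
noncomputable def hamDeriv {k : Type*} [CommRing k] {m : ℕ} (μ : Fin m → k)
    (V : MvPolynomial (Fin m) k) (F : MvPolynomial (Fin m ⊕ Fin m) k) :
    MvPolynomial (Fin m ⊕ Fin m) k :=
  ∑ i, C (μ i) * X (Sum.inr i) * pderiv (Sum.inl i) F
    - ∑ i, rename Sum.inl (pderiv i V) * pderiv (Sum.inr i) F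

/-- The natural Hamiltonian `H = (1/2)Σ μᵢ pᵢ² + V(q)`. -/
noncomputable def ham {m : ℕ} (μ : Fin m → ℂ) (V : MvPolynomial (Fin m) ℂ) :
    MvPolynomial (Fin m ⊕ Fin m) ℂ :=
  C (1/2 : ℂ) * ∑ i, C (μ i) * X (Sum.inr i) ^ 2 + rename Sum.inl V

/-- The time-reversal automorphism `τ : qᵢ ↦ qᵢ, pᵢ ↦ −pᵢ`. -/
noncomputable def tauRev {m : ℕ} :
    MvPolynomial (Fin m ⊕ Fin m) ℂ →ₐ[ℂ] MvPolynomial (Fin m ⊕ Fin m) ℂ :=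
  aeval (Sum.elim (fun i => X (Sum.inl i)) (fun i => - X (Sum.inr i)))

-- ### Auxiliary: weighted degree via a polynomial embedding

noncomputable def PsiW {σ : Type*} (w : σ → ℕ) :
    MvPolynomial σ ℂ →ₐ[ℂ] Polynomial (MvPolynomial σ ℂ) :=
  aeval (fun j => Polynomial.C (X j) * Polynomial.X ^ w j)

lemma PsiW_monomial {σ : Type*} (w : σ → ℕ) (d : σ →₀ ℕ) (c : ℂ) :
    PsiW w (monomial d c)
      = Polynomial.C (monomial d c) * Polynomial.X ^ (Finsupp.weight w d : ℕ) := by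
  classical
  rw [PsiW, aeval_monomial, monomial_eq]
  have h1 : (d.prod fun i k => (Polynomial.C (X i : MvPolynomial σ ℂ) * Polynomial.X ^ w i) ^ k)
      = (∏ i ∈ d.support, Polynomial.C ((X i : MvPolynomial σ ℂ) ^ d i))
        * Polynomial.X ^ (∑ i ∈ d.support, w i * d i) := by
    rw [Finsupp.prod, ← Finset.prod_pow_eq_pow_sum, ← Finset.prod_mul_distrib]
    refine Finset.prod_congr rfl fun i _ => ?_
    rw [mul_pow, ← Polynomial.C_pow, ← pow_mul]
  rw [h1, ← map_prod]
  have h2 : (Finsupp.weight w d : ℕ) = ∑ i ∈ d.support, w i * d i := by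
    rw [Finsupp.weight_apply, Finsupp.sum]
    exact Finset.sum_congr rfl fun i _ => by rw [smul_eq_mul, mul_comm]
  rw [h2]
  have h3 : (algebraMap ℂ (Polynomial (MvPolynomial σ ℂ))) c = Polynomial.C (C c) := rfl
  rw [h3, ← mul_assoc, ← Polynomial.C_mul]
  congr 2

lemma coeff_coeff_PsiW {σ : Type*} (w : σ → ℕ) (P : MvPolynomial σ ℂ) (d : σ →₀ ℕ) :
    ((PsiW w P).coeff (Finsupp.weight w d)).coeff d = P.coeff d := by
  classical
  conv_lhs => rw [P.as_sum, map_sum, Polynomial.finset_sum_coeff]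
  simp_rw [PsiW_monomial, Polynomial.coeff_C_mul, Polynomial.coeff_X_pow, coeff_sum]
  rw [Finset.sum_eq_single d]
  · by_cases h : d ∈ P.support
    · simp [coeff_monomial]
    · simp [MvPolynomial.notMem_support_iff.mp h]
  · intro e _ hne
    simp only [mul_ite, mul_one, mul_zero, coeff_monomial]
    split_ifs with h1
    · simp [hne]
    · rfl
  · intro hd
    simp [MvPolynomial.notMem_support_iff.mp hd]

lemma le_natDegree_PsiW {σ : Type*} (w : σ → ℕ) {P : MvPolynomial σ ℂ} {d : σ →₀ ℕ}
    (hd : d ∈ P.support) : (Finsupp.weight w d : ℕ) ≤ (PsiW w P).natDegree := by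
  apply Polynomial.le_natDegree_of_ne_zero
  intro h0
  apply MvPolynomial.mem_support_iff.mp hd
  rw [← coeff_coeff_PsiW w P d, h0, MvPolynomial.coeff_zero]

lemma PsiW_ne_zero {σ : Type*} (w : σ → ℕ) {P : MvPolynomial σ ℂ} (hP : P ≠ 0) :
    PsiW w P ≠ 0 := by
  obtain ⟨d, hd⟩ := MvPolynomial.ne_zero_iff.mp hP
  intro h0
  apply hd
  rw [← coeff_coeff_PsiW w P d, h0]
  simp

lemma natDegree_PsiW_le {σ : Type*} (w : σ → ℕ) {P : MvPolynomial σ ℂ} {n : ℕ}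
    (h : ∀ d ∈ P.support, (Finsupp.weight w d : ℕ) ≤ n) : (PsiW w P).natDegree ≤ n := by
  conv_lhs => rw [P.as_sum, map_sum]
  apply Polynomial.natDegree_sum_le_of_forall_le
  intro d hd
  rw [PsiW_monomial]
  refine le_trans (Polynomial.natDegree_mul_le) ?_
  simpa using le_trans (Polynomial.natDegree_X_pow_le (R := MvPolynomial σ ℂ) _) (h d hd)

lemma weight_add_single {σ : Type*} (w : σ → ℕ) (d : σ →₀ ℕ) (j : σ) :
    (Finsupp.weight w (d + Finsupp.single j 1) : ℕ) = Finsupp.weight w d + w j := by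
  rw [map_add]
  simp [Finsupp.weight_apply, Finsupp.sum_single_index]

lemma support_pderiv_mem {σ : Type*} [DecidableEq σ] (j : σ) {P : MvPolynomial σ ℂ}
    {d : σ →₀ ℕ} (hd : d ∈ (pderiv j P).support) :
    d + Finsupp.single j 1 ∈ P.support := by
  have hrw : pderiv j P = ∑ s ∈ P.support,
      monomial (s - Finsupp.single j 1) (P.coeff s * s j) := by
    conv_lhs => rw [P.as_sum, map_sum]
    exact Finset.sum_congr rfl fun s _ => by rw [pderiv_monomial]
  rw [hrw] at hd
  obtain ⟨s, hs, hds⟩ := Finset.mem_biUnion.mp (MvPolynomial.support_sum hd)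
  have hsub := MvPolynomial.support_monomial_subset hds
  rw [Finset.mem_singleton] at hsub
  have hcoeff : P.coeff s * (s j : ℂ) ≠ 0 := by
    intro h0
    rw [hsub] at hds
    simp only [MvPolynomial.mem_support_iff, h0, MvPolynomial.coeff_monomial] at hds
    simp at hds
  have hsj : s j ≠ 0 := by
    intro h0; apply hcoeff; rw [h0]; simp
  have : d + Finsupp.single j 1 = s := by
    subst hsub
    ext x
    simp only [Finsupp.add_apply, Finsupp.tsub_apply, Finsupp.single_apply]
    split_ifs with h
    · subst h; omega
    · omega
  rw [this]
  exact hs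


/-- If `deg V ≥ 2` and `F` is a Darboux polynomial of `d_H` with cofactor `Λ`,
then `Λ` depends only on the variables `q`. -/
theorem statement13 {m : ℕ} (μ : Fin m → ℂ) (V : MvPolynomial (Fin m) ℂ)
    (hV : 2 ≤ V.totalDegree)
    (F Λ : MvPolynomial (Fin m ⊕ Fin m) ℂ) (hF : F ≠ 0)
    (hDb : hamDeriv μ V F = Λ * F) :
    ∃ Λ₀ : MvPolynomial (Fin m) ℂ, Λ = rename Sum.inl Λ₀ := by
  classical
  by_cases hΛ : Λ = 0
  · exact ⟨0, by simp [hΛ]⟩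
  set r := V.totalDegree with hr
  set w : Fin m ⊕ Fin m → ℕ := Sum.elim (fun _ => 2) (fun _ => r) with hw
  set W : MvPolynomial (Fin m ⊕ Fin m) ℂ → ℕ := fun P => (PsiW w P).natDegree with hW
  -- weight bound for partial derivatives
  have hpd : ∀ (j : Fin m ⊕ Fin m) (G : MvPolynomial (Fin m ⊕ Fin m) ℂ),
      ∀ d ∈ (pderiv j G).support, (Finsupp.weight w d : ℕ) + w j ≤ W G := by
    intro j G d hd
    rw [← weight_add_single]
    exact le_natDegree_PsiW w (support_pderiv_mem j hd)
  -- weight bound for rename inl (pderiv i V)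
  have hren : ∀ (i : Fin m),
      ∀ d ∈ (rename Sum.inl (pderiv i V) : MvPolynomial (Fin m ⊕ Fin m) ℂ).support,
      (Finsupp.weight w d : ℕ) + 2 ≤ 2 * r := by
    intro i d hd
    rw [MvPolynomial.mem_support_iff] at hd
    obtain ⟨e, he, hce⟩ := coeff_rename_ne_zero _ _ _ hd
    have h1 : e + Finsupp.single i 1 ∈ V.support :=
      support_pderiv_mem i (MvPolynomial.mem_support_iff.mpr hce)
    have h2 : ((e + Finsupp.single i 1).sum fun _ n => n) ≤ r := le_totalDegree h1
    have h3 : (e.sum fun _ n => n) + 1 ≤ r := by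
      rwa [Finsupp.sum_add_index' (fun _ => rfl) (fun _ _ _ => rfl),
        Finsupp.sum_single_index rfl] at h2
    have h4 : (Finsupp.weight w d : ℕ) = 2 * e.sum fun _ n => n := by
      subst he
      rw [Finsupp.weight_apply,
        Finsupp.sum_mapDomain_index (fun _ => by simp) (fun _ _ _ => by rw [add_smul])]
      rw [Finsupp.sum, Finsupp.sum, Finset.mul_sum]
      exact Finset.sum_congr rfl fun x _ => by simp [hw, mul_comm]
    omega
  -- key pointwise bound on the support of hamDeriv
  have key : ∀ d ∈ (hamDeriv μ V F).support, (Finsupp.weight w d : ℕ) + 2 ≤ W F + r := by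
    intro d hd
    rw [hamDeriv, sub_eq_add_neg] at hd
    rcases Finset.mem_union.mp (MvPolynomial.support_add hd) with hd | hd
    · -- q-part
      obtain ⟨i, _, hdi⟩ := Finset.mem_biUnion.mp (MvPolynomial.support_sum hd)
      rw [C_mul_X_eq_monomial] at hdi
      have := MvPolynomial.support_mul _ _ hdi
      obtain ⟨a, ha, b, hb, hab⟩ := Finset.mem_add.mp this
      have ha' := MvPolynomial.support_monomial_subset ha
      rw [Finset.mem_singleton] at ha'
      subst ha' hab
      have hb' := hpd (Sum.inl i) F b hb
      have hwa : (Finsupp.weight w (Finsupp.single (Sum.inr i) 1) : ℕ) = r := by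
        rw [Finsupp.weight_apply, Finsupp.sum_single_index (by simp)]
        simp [hw]
      rw [map_add, hwa]
      have : w (Sum.inl i) = 2 := rfl
      omega
    · -- p-part
      rw [MvPolynomial.support_neg] at hd
      obtain ⟨i, _, hdi⟩ := Finset.mem_biUnion.mp (MvPolynomial.support_sum hd)
      have := MvPolynomial.support_mul _ _ hdi
      obtain ⟨a, ha, b, hb, hab⟩ := Finset.mem_add.mp this
      subst hab
      have ha' := hren i a ha
      have hb' := hpd (Sum.inr i) F b hb
      have : w (Sum.inr i) = r := rfl
      rw [map_add]
      omega
  -- degree comparison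
  have hWmul : W (Λ * F) = W Λ + W F := by
    rw [hW]
    simp only [map_mul]
    exact Polynomial.natDegree_mul (PsiW_ne_zero w hΛ) (PsiW_ne_zero w hF)
  have hle : W (hamDeriv μ V F) ≤ W F + r - 2 :=
    natDegree_PsiW_le w fun d hd => by have := key d hd; omega
  rw [hDb, hWmul] at hle
  have hΛle : W Λ + 2 ≤ r := by omega
  -- conclude Λ has no p-variables
  have hvars : ↑Λ.vars ⊆ Set.range (Sum.inl : Fin m → Fin m ⊕ Fin m) := by
    intro x hx
    cases x with
    | inl i => exact ⟨i, rfl⟩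
    | inr i =>
      exfalso
      obtain ⟨d, hd, hxd⟩ := (MvPolynomial.mem_vars _).mp hx
      have hWd : (Finsupp.weight w d : ℕ) ≤ W Λ := le_natDegree_PsiW w hd
      have hxd' : 1 ≤ d (Sum.inr i) := Nat.one_le_iff_ne_zero.mpr (Finsupp.mem_support_iff.mp hxd)
      have hterm : d (Sum.inr i) • w (Sum.inr i) ≤ ∑ x ∈ d.support, d x • w x :=
        Finset.single_le_sum (f := fun x => d x • w x) (fun x _ => Nat.zero_le _) hxd
      have hwr : w (Sum.inr i) = r := rfl
      have : r ≤ (Finsupp.weight w d : ℕ) := by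
        rw [Finsupp.weight_apply, Finsupp.sum]
        refine le_trans ?_ hterm
        rw [hwr, smul_eq_mul]
        exact Nat.le_mul_of_pos_left r hxd'
      omega
  obtain ⟨Λ₀, hΛ₀⟩ := exists_rename_eq_of_vars_subset_range Λ Sum.inl Sum.inl_injective hvars
  exact ⟨Λ₀, hΛ₀.symm⟩
end

section
/- Let V ∈ ℂ[q_1,...,q_m] be a nonzero polynomial of even degree and suppose the Hamiltonian derivation d_H of H = (1/2)Σ μ_i p_i² + V(q) has a proper Darboux polynomial F with cofactor Λ ≠ 0. Let τ be the automorphism of ℂ[q,p] fixing q_i and sending p_i ↦ −p_i. Then τ(F) is a proper Darboux polynomial of d_H with cofactor −Λ, and G = τ(F)·F is a polynomial first integral of d_H (i.e., d_H(G) = 0). -/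
open MvPolynomial

set_option linter.unusedSectionVars false


noncomputable section Aux

variable {σ : Type*} [DecidableEq σ]

/-- coefficientwise partial derivative on `(MvPolynomial σ ℂ)[X]`. -/
def cpd (j : σ) (f : Polynomial (MvPolynomial σ ℂ)) : Polynomial (MvPolynomial σ ℂ) :=
  ⟨AddMonoidAlgebra.ofCoeff (f.toFinsupp.coeff.mapRange (pderiv j) (map_zero _))⟩

@[simp] lemma cpd_coeff (j : σ) (f : Polynomial (MvPolynomial σ ℂ)) (n : ℕ) :
    (cpd j f).coeff n = pderiv j (f.coeff n) := by
  simp [cpd, Polynomial.coeff, Finsupp.mapRange_apply, AddMonoidAlgebra.coeff_ofCoeff]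

lemma cpd_add (j : σ) (f g : Polynomial (MvPolynomial σ ℂ)) :
    cpd j (f + g) = cpd j f + cpd j g := by
  ext n; simp

lemma cpd_mul (j : σ) (f g : Polynomial (MvPolynomial σ ℂ)) :
    cpd j (f * g) = cpd j f * g + f * cpd j g := by
  refine Polynomial.ext fun n => ?_
  simp only [cpd_coeff, Polynomial.coeff_mul, Polynomial.coeff_add, map_sum]
  rw [← Finset.sum_add_distrib]
  exact Finset.sum_congr rfl fun x _ => pderiv_mul

lemma cpd_C (j : σ) (a : MvPolynomial σ ℂ) :
    cpd j (Polynomial.C a) = Polynomial.C (pderiv j a) := by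
  ext n; simp [Polynomial.coeff_C, apply_ite (pderiv j)]

lemma cpd_Xpow (j : σ) (k : ℕ) :
    cpd j ((Polynomial.X : Polynomial (MvPolynomial σ ℂ)) ^ k) = 0 := by
  ext n; simp [Polynomial.coeff_X_pow, apply_ite (pderiv j)]

lemma cpd_natDegree_le (j : σ) (f : Polynomial (MvPolynomial σ ℂ)) :
    (cpd j f).natDegree ≤ f.natDegree := by
  refine Polynomial.natDegree_le_iff_coeff_eq_zero.2 fun N hN => ?_
  rw [cpd_coeff, Polynomial.coeff_eq_zero_of_natDegree_lt hN, map_zero]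

end Aux

noncomputable section Aux2
variable {σ : Type*} [DecidableEq σ]

/-- scaling map `X j ↦ X j * T ^ ε j` into the polynomial ring in `T`. -/
def Phi (ε : σ → ℕ) : MvPolynomial σ ℂ →ₐ[ℂ] Polynomial (MvPolynomial σ ℂ) :=
  aeval (fun j => Polynomial.C (X j) * Polynomial.X ^ ε j)

@[simp] lemma Phi_X (ε : σ → ℕ) (j : σ) :
    Phi ε (X j) = Polynomial.C (X j) * Polynomial.X ^ ε j := aeval_X _ _

@[simp] lemma Phi_C (ε : σ → ℕ) (a : ℂ) : Phi ε (C a) = Polynomial.C (C a) := by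
  simp [Phi, aeval_C]

lemma Phi_eval_one (ε : σ → ℕ) (F : MvPolynomial σ ℂ) : (Phi ε F).eval 1 = F := by
  induction F using MvPolynomial.induction_on with
  | C a => simp
  | add p q hp hq => simp [map_add, hp, hq]
  | mul_X p i hp => simp [map_mul, hp]

lemma Phi_ne_zero (ε : σ → ℕ) {F : MvPolynomial σ ℂ} (hF : F ≠ 0) : Phi ε F ≠ 0 := by
  intro h
  apply hF
  rw [← Phi_eval_one ε F, h, Polynomial.eval_zero]

lemma cpd_Phi (ε : σ → ℕ) (j : σ) (F : MvPolynomial σ ℂ) :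
    cpd j (Phi ε F) = Polynomial.X ^ ε j * Phi ε (pderiv j F) := by
  induction F using MvPolynomial.induction_on with
  | C a => simp [cpd_C]
  | add p q hp hq => simp [map_add, cpd_add, hp, hq, mul_add]
  | mul_X p i hp =>
      rw [map_mul, Phi_X, ← mul_assoc, cpd_mul, cpd_mul, cpd_C, cpd_Xpow, hp, pderiv_mul,
        map_add, map_mul, Phi_X, pderiv_X]
      by_cases h : j = i
      · subst h; simp; ring
      · simp [h, Ne.symm h]; ring

end Aux2

noncomputable section Tau
open Polynomial in
variable {m : ℕ}

@[simp] lemma tauRev_X_inl (i : Fin m) : tauRev (X (Sum.inl i)) = X (Sum.inl i) := by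
  simp [tauRev]

@[simp] lemma tauRev_X_inr (i : Fin m) : tauRev (X (Sum.inr i)) = - X (Sum.inr i) := by
  simp [tauRev]

@[simp] lemma tauRev_C (a : ℂ) : tauRev (C a : MvPolynomial (Fin m ⊕ Fin m) ℂ) = C a := by
  simp [tauRev, aeval_C]

lemma tauRev_tauRev (F : MvPolynomial (Fin m ⊕ Fin m) ℂ) : tauRev (tauRev F) = F := by
  induction F using MvPolynomial.induction_on with
  | C a => simp
  | add p q hp hq => simp [map_add, hp, hq]
  | mul_X p i hp => cases i <;> simp [map_mul, hp]

lemma tauRev_ne_zero {F : MvPolynomial (Fin m ⊕ Fin m) ℂ} (hF : F ≠ 0) : tauRev F ≠ 0 := by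
  intro h
  apply hF
  rw [← tauRev_tauRev F, h, map_zero]

lemma tauRev_rename (G : MvPolynomial (Fin m) ℂ) :
    tauRev (rename Sum.inl G) = rename Sum.inl G := by
  induction G using MvPolynomial.induction_on with
  | C a => simp [rename_C]
  | add p q hp hq => simp [map_add, hp, hq]
  | mul_X p i hp => simp [map_mul, hp]

/-- sign of a variable under `tauRev`. -/
def tsgn : Fin m ⊕ Fin m → ℂ := Sum.elim (fun _ => 1) (fun _ => -1)

@[simp] lemma tauRev_X (j : Fin m ⊕ Fin m) :
    tauRev (X j) = C (tsgn j) * X j := by cases j <;> simp [tsgn]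

lemma pderiv_tauRev (j : Fin m ⊕ Fin m) (F : MvPolynomial (Fin m ⊕ Fin m) ℂ) :
    pderiv j (tauRev F) = C (tsgn j) * tauRev (pderiv j F) := by
  induction F using MvPolynomial.induction_on with
  | C a => simp
  | add p q hp hq => simp [map_add, hp, hq]; ring
  | mul_X p i hp =>
      by_cases h : j = i
      · subst h
        simp only [map_mul, tauRev_X, pderiv_mul, pderiv_C, zero_mul, pderiv_X_self, mul_one,
          zero_add, hp, map_add, map_mul, map_one, tauRev_C]
        ring
      · simp only [map_mul, tauRev_X, pderiv_mul, pderiv_C, zero_mul, mul_zero, add_zero,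
          pderiv_X_of_ne h, pderiv_X_of_ne (Ne.symm h), hp, map_add, map_mul, tauRev_C,
          zero_add]
        ring

lemma pderiv_tauRev_inl (i : Fin m) (F : MvPolynomial (Fin m ⊕ Fin m) ℂ) :
    pderiv (Sum.inl i) (tauRev F) = tauRev (pderiv (Sum.inl i) F) := by
  simp [pderiv_tauRev, tsgn]

lemma pderiv_tauRev_inr (i : Fin m) (F : MvPolynomial (Fin m ⊕ Fin m) ℂ) :
    pderiv (Sum.inr i) (tauRev F) = - tauRev (pderiv (Sum.inr i) F) := by
  simp [pderiv_tauRev, tsgn]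

lemma hamDeriv_tauRev (μ : Fin m → ℂ) (V : MvPolynomial (Fin m) ℂ)
    (F : MvPolynomial (Fin m ⊕ Fin m) ℂ) :
    hamDeriv μ V (tauRev F) = - tauRev (hamDeriv μ V F) := by
  simp only [hamDeriv, map_sub, map_sum, map_mul, pderiv_tauRev_inl, pderiv_tauRev_inr,
    tauRev_X_inr, tauRev_rename, tauRev_C, neg_sub, mul_neg, neg_mul, Finset.sum_neg_distrib,
    neg_neg, sub_neg_eq_add, neg_add_rev]
  ring

lemma hamDeriv_mul (μ : Fin m → ℂ) (V : MvPolynomial (Fin m) ℂ)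
    (F G : MvPolynomial (Fin m ⊕ Fin m) ℂ) :
    hamDeriv μ V (F * G) = hamDeriv μ V F * G + F * hamDeriv μ V G := by
  have key : ∀ (f g : Fin m → MvPolynomial (Fin m ⊕ Fin m) ℂ),
      (∀ i, f i = g i) → ∑ i, f i = ∑ i, g i :=
    fun f g h => Finset.sum_congr rfl fun i _ => h i
  simp only [hamDeriv, pderiv_mul, sub_mul, mul_sub, Finset.sum_mul, Finset.mul_sum,
    ← Finset.sum_sub_distrib, ← Finset.sum_add_distrib]
  exact key _ _ fun i => by ring

end Tau

noncomputable section Main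
variable {m : ℕ}

/-- p-weight. -/
def wP : Fin m ⊕ Fin m → ℕ := Sum.elim (fun _ => 0) (fun _ => 1)
/-- q-weight. -/
def wQ : Fin m ⊕ Fin m → ℕ := Sum.elim (fun _ => 1) (fun _ => 0)

@[simp] lemma wP_inl (i : Fin m) : wP (Sum.inl i) = 0 := rfl
@[simp] lemma wP_inr (i : Fin m) : wP (Sum.inr i) = 1 := rfl
@[simp] lemma wQ_inl (i : Fin m) : wQ (Sum.inl i) = 1 := rfl
@[simp] lemma wQ_inr (i : Fin m) : wQ (Sum.inr i) = 0 := rfl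

lemma PhiP_rename (G : MvPolynomial (Fin m) ℂ) :
    Phi wP (rename Sum.inl G) = Polynomial.C (rename Sum.inl G) := by
  induction G using MvPolynomial.induction_on with
  | C a => simp [rename_C]
  | add p q hp hq => simp [map_add, hp, hq]
  | mul_X p i hp => simp [map_mul, hp]

lemma tauRev_eq_eval (G : MvPolynomial (Fin m ⊕ Fin m) ℂ) :
    tauRev G = (Phi wP G).eval (-1) := by
  induction G using MvPolynomial.induction_on with
  | C a => simp
  | add p q hp hq => simp [map_add, hp, hq]
  | mul_X p i hp => cases i <;> simp [map_mul, hp, tsgn]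

end Main

noncomputable section Cofactor
variable {m : ℕ}

lemma tauRev_cofactor (μ : Fin m → ℂ) (V : MvPolynomial (Fin m) ℂ)
    {F Λ : MvPolynomial (Fin m ⊕ Fin m) ℂ} (hF : F ≠ 0)
    (hDb : hamDeriv μ V F = Λ * F) : tauRev Λ = Λ := by
  by_cases hΛ : Λ = 0
  · simp [hΛ]
  set φ := Phi (wP (m := m)) with hφdef
  set f := φ F with hfdef
  set n := f.natDegree with hndef
  have hf0 : f ≠ 0 := Phi_ne_zero _ hF
  have hl0 : φ Λ ≠ 0 := Phi_ne_zero _ hΛ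
  -- commutation facts
  have hq : ∀ i : Fin m, φ (pderiv (Sum.inl i) F) = cpd (Sum.inl i) f := by
    intro i
    have h := cpd_Phi (wP (m := m)) (Sum.inl i) F
    simpa using h.symm
  have hpcoeff : ∀ (i : Fin m) (N : ℕ), (φ (pderiv (Sum.inr i) F)).coeff N
      = pderiv (Sum.inr i) (f.coeff (N + 1)) := by
    intro i N
    have h := cpd_Phi (wP (m := m)) (Sum.inr i) F
    have h2 := congrArg (fun g => Polynomial.coeff g (N + 1)) h
    simpa [Polynomial.coeff_X_mul] using h2.symm
  have hpz : ∀ (i : Fin m) (N : ℕ), n ≤ N → (φ (pderiv (Sum.inr i) F)).coeff N = 0 := by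
    intro i N hN
    rw [hpcoeff, Polynomial.coeff_eq_zero_of_natDegree_lt (by omega), map_zero]
  have hpdeg : ∀ i : Fin m, (φ (pderiv (Sum.inr i) F)).natDegree ≤ n := fun i =>
    Polynomial.natDegree_le_iff_coeff_eq_zero.2 fun N hN => hpz i N (le_of_lt hN)
  -- expansion of φ (hamDeriv μ V F)
  have hd : φ (hamDeriv μ V F)
      = Polynomial.X * ∑ i, Polynomial.C (C (μ i) * X (Sum.inr i)) * cpd (Sum.inl i) f
        - ∑ i, Polynomial.C (rename Sum.inl (pderiv i V)) * φ (pderiv (Sum.inr i) F) := by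
    rw [hamDeriv, map_sub, map_sum, map_sum, Finset.mul_sum]
    congr 1
    · refine Finset.sum_congr rfl fun i _ => ?_
      rw [map_mul, map_mul, hq, Phi_C, Phi_X]
      simp only [wP_inr, pow_one, map_mul]
      ring
    · exact Finset.sum_congr rfl fun i _ => by rw [map_mul, PhiP_rename]
  -- degree bound
  have hdeg : (φ (hamDeriv μ V F)).natDegree ≤ n + 1 := by
    rw [hd]
    refine le_trans (Polynomial.natDegree_sub_le _ _) (max_le ?_ ?_)
    · refine le_trans (Polynomial.natDegree_mul_le) ?_
      have h1 : (∑ i, Polynomial.C (C (μ i) * X (Sum.inr i)) * cpd (Sum.inl i) f).natDegree ≤ n :=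
        Polynomial.natDegree_sum_le_of_forall_le _ _ fun i _ =>
          le_trans (Polynomial.natDegree_C_mul_le _ _) (cpd_natDegree_le _ _)
      calc Polynomial.X.natDegree + _ ≤ 1 + n := by
            exact add_le_add (le_of_eq Polynomial.natDegree_X) h1
        _ = n + 1 := by omega
    · refine le_trans (Polynomial.natDegree_sum_le_of_forall_le _ _ fun i _ =>
        le_trans (Polynomial.natDegree_C_mul_le _ _) (hpdeg i)) (by omega)
  have heq : φ Λ * f = φ (hamDeriv μ V F) := by rw [hDb, map_mul]
  have hΛdeg : (φ Λ).natDegree ≤ 1 := by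
    have h1 : (φ Λ * f).natDegree = (φ Λ).natDegree + n := Polynomial.natDegree_mul hl0 hf0
    rw [heq] at h1
    omega
  have hrep : φ Λ = Polynomial.C ((φ Λ).coeff 1) * Polynomial.X + Polynomial.C ((φ Λ).coeff 0) :=
    Polynomial.eq_X_add_C_of_natDegree_le_one hΛdeg
  -- the equation at degree n+1
  have hstar : (φ Λ).coeff 1 * f.coeff n
      = ∑ i, C (μ i) * X (Sum.inr i) * pderiv (Sum.inl i) (f.coeff n) := by
    have h := congrArg (fun g => Polynomial.coeff g (n + 1)) heq
    rw [hd] at h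
    nth_rewrite 1 [hrep] at h
    rw [add_mul, Polynomial.coeff_add, mul_assoc, Polynomial.coeff_C_mul,
      Polynomial.coeff_C_mul, Polynomial.coeff_X_mul,
      Polynomial.coeff_eq_zero_of_natDegree_lt (show n < n + 1 by omega), mul_zero, add_zero,
      Polynomial.coeff_sub, Polynomial.coeff_X_mul, Polynomial.finset_sum_coeff,
      Polynomial.finset_sum_coeff] at h
    have hz2 : ∑ b : Fin m,
        (Polynomial.C (rename Sum.inl (pderiv b V)) * φ (pderiv (Sum.inr b) F)).coeff (n + 1)
        = 0 :=
      Finset.sum_eq_zero fun i _ => by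
        rw [Polynomial.coeff_C_mul, hpz i (n + 1) (by omega), mul_zero]
    have hs1 : ∑ b : Fin m,
        (Polynomial.C (C (μ b) * X (Sum.inr b)) * cpd (Sum.inl b) f).coeff n
        = ∑ i, C (μ i) * X (Sum.inr i) * pderiv (Sum.inl i) (f.coeff n) :=
      Finset.sum_congr rfl fun i _ => by rw [Polynomial.coeff_C_mul, cpd_coeff]
    rw [h, hz2, hs1, sub_zero]
  have hFn : f.coeff n ≠ 0 := by
    rw [← Polynomial.leadingCoeff]
    exact Polynomial.leadingCoeff_ne_zero.2 hf0
  -- show the linear coefficient vanishes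
  have hΛ1 : (φ Λ).coeff 1 = 0 := by
    by_contra h1
    set ψ := Phi (wQ (m := m)) with hψdef
    set g := ψ (f.coeff n) with hgdef
    have hg0 : g ≠ 0 := Phi_ne_zero _ hFn
    set M := g.natDegree with hMdef
    have h2 := congrArg ψ hstar
    rw [map_mul, map_sum] at h2
    have h3 : Polynomial.X * (ψ ((φ Λ).coeff 1) * g)
        = ∑ i, Polynomial.C (C (μ i) * X (Sum.inr i)) * cpd (Sum.inl i) g := by
      rw [h2, Finset.mul_sum]
      refine Finset.sum_congr rfl fun i _ => ?_
      rw [map_mul, map_mul, Phi_C, Phi_X]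
      have hc := cpd_Phi (wQ (m := m)) (Sum.inl i) (f.coeff n)
      simp only [wQ_inl, wQ_inr, pow_one, pow_zero, mul_one] at hc ⊢
      rw [hc, map_mul]
      ring
    have hdegR : (∑ i, Polynomial.C (C (μ i) * X (Sum.inr i)) * cpd (Sum.inl i) g).natDegree ≤ M :=
      Polynomial.natDegree_sum_le_of_forall_le _ _ fun i _ =>
        le_trans (Polynomial.natDegree_C_mul_le _ _) (cpd_natDegree_le _ _)
    have hψ1 : ψ ((φ Λ).coeff 1) ≠ 0 := Phi_ne_zero _ h1
    have hdegL : (Polynomial.X * (ψ ((φ Λ).coeff 1) * g)).natDegree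
        = 1 + ((ψ ((φ Λ).coeff 1)).natDegree + M) := by
      rw [Polynomial.natDegree_mul Polynomial.X_ne_zero (mul_ne_zero hψ1 hg0),
        Polynomial.natDegree_mul hψ1 hg0, Polynomial.natDegree_X]
    rw [h3] at hdegL
    omega
  -- conclude
  have hrep0 : φ Λ = Polynomial.C ((φ Λ).coeff 0) := by
    rw [hrep, hΛ1]
    simp
  have hid : (φ Λ).eval 1 = Λ := Phi_eval_one _ _
  rw [tauRev_eq_eval, ← hφdef, hrep0, Polynomial.eval_C]
  rw [hrep0, Polynomial.eval_C] at hid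
  exact hid

end Cofactor

/-- If `V ≠ 0` has even degree and `F` is a proper Darboux polynomial of `d_H`
with cofactor `Λ ≠ 0`, then `τ(F)` is a proper Darboux polynomial with cofactor
`−Λ`, and `G = τ(F)·F` is a polynomial first integral of `d_H`. -/
theorem statement15 {m : ℕ} (μ : Fin m → ℂ) (V : MvPolynomial (Fin m) ℂ)
    (hV0 : V ≠ 0) (heven : Even V.totalDegree)
    (F Λ : MvPolynomial (Fin m ⊕ Fin m) ℂ) (hF : F ≠ 0) (hΛ : Λ ≠ 0)
    (hDb : hamDeriv μ V F = Λ * F) :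
    tauRev F ≠ 0 ∧ hamDeriv μ V (tauRev F) = (-Λ) * tauRev F ∧
      hamDeriv μ V (tauRev F * F) = 0 := by
  have hτΛ : tauRev Λ = Λ := tauRev_cofactor μ V hF hDb
  have h1 : tauRev F ≠ 0 := tauRev_ne_zero hF
  have h2 : hamDeriv μ V (tauRev F) = (-Λ) * tauRev F := by
    rw [hamDeriv_tauRev, hDb, map_mul, hτΛ]
    ring
  refine ⟨h1, h2, ?_⟩
  rw [hamDeriv_mul, h2, hDb]
  ring
end

section
/- Let m ≥ 2, V ∈ ℂ[q_1,...,q_m] a nonzero polynomial, and μ_1,...,μ_m ∈ ℂ with at least two of the μ_i nonzero. Then the polynomial H = (1/2)Σ_{i=1}^m μ_i p_i² + V(q) is irreducible in ℂ[q_1,...,q_m,p_1,...,p_m]. -/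
section QuadAux
open Polynomial

/-- Over a domain, `X^2 - C d` is irreducible if `d` is not a square. -/
lemma quad_irred {R : Type*} [CommRing R] [IsDomain R] (d : R)
    (h : ∀ r : R, r * r ≠ d) : Irreducible (X ^ 2 - C d : R[X]) := by
  have hmon : (X ^ 2 - C d : R[X]).Monic := monic_X_pow_sub_C d two_ne_zero
  constructor
  · intro hu
    have := natDegree_eq_zero_of_isUnit hu
    rw [natDegree_X_pow_sub_C] at this
    omega
  · intro f g hfg
    have hf0 : f ≠ 0 := by rintro rfl; exact hmon.ne_zero (by simpa using hfg)
    have hg0 : g ≠ 0 := by rintro rfl; exact hmon.ne_zero (by simpa using hfg)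
    have hdeg : f.natDegree + g.natDegree = 2 := by
      rw [← natDegree_mul hf0 hg0, ← hfg, natDegree_X_pow_sub_C]
    have hlc : f.leadingCoeff * g.leadingCoeff = 1 := by
      rw [← leadingCoeff_mul, ← hfg]; exact hmon
    rcases Nat.lt_or_ge f.natDegree 1 with hf1 | hf1
    · left
      have hf : f = C (f.coeff 0) := eq_C_of_natDegree_eq_zero (by omega)
      have : IsUnit f.leadingCoeff := IsUnit.of_mul_eq_one _ hlc
      rw [Polynomial.leadingCoeff, (by omega : f.natDegree = 0)] at this
      exact hf ▸ (isUnit_C.mpr this)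
    rcases Nat.lt_or_ge g.natDegree 1 with hg1 | hg1
    · right
      have hg : g = C (g.coeff 0) := eq_C_of_natDegree_eq_zero (by omega)
      have : IsUnit g.leadingCoeff := IsUnit.of_mul_eq_one (a := g.leadingCoeff) f.leadingCoeff
        (by rw [mul_comm]; exact hlc)
      rw [Polynomial.leadingCoeff, (by omega : g.natDegree = 0)] at this
      exact hg ▸ (isUnit_C.mpr this)
    -- both degree 1
    have hfd : f.natDegree = 1 := by omega
    have hgd : g.natDegree = 1 := by omega
    set a := f.coeff 1; set b := f.coeff 0; set c := g.coeff 1; set e := g.coeff 0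
    have hf : f = C a * X + C b := eq_X_add_C_of_natDegree_le_one hfd.le
    have hg : g = C c * X + C e := eq_X_add_C_of_natDegree_le_one hgd.le
    rw [hf, hg] at hfg
    have hexp : (C a * X + C b) * (C c * X + C e)
        = C (a * c) * X ^ 2 + C (a * e + b * c) * X + C (b * e) := by
      simp only [C_mul, C_add]; ring
    rw [hexp] at hfg
    have h2 : (1 : R) = a * c := by
      have := congrArg (fun p => Polynomial.coeff p 2) hfg
      simpa [mul_assoc, coeff_C_mul, coeff_X_pow] using this
    have h1 : (0 : R) = a * e + b * c := by
      have := congrArg (fun p => Polynomial.coeff p 1) hfg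
      simpa [mul_assoc, coeff_C_mul, coeff_X_pow] using this
    have h0 : -d = b * e := by
      have := congrArg (fun p => Polynomial.coeff p 0) hfg
      simpa [mul_assoc, coeff_C_mul, coeff_X_pow] using this
    exact absurd (by linear_combination (b * c) * h1.symm - (b * e) * h2.symm + h0 :
      (b * c) * (b * c) = d) (h (b * c))

/-- If `r^2 = α X^2 + e` with `α ≠ 0` in a char-zero-ish domain, then `e = 0`. -/
lemma sq_eq_quad {R : Type*} [CommRing R] [IsDomain R] (htwo : (2 : R) ≠ 0)
    (α e : R) (hα : α ≠ 0) (r : R[X]) (h : r * r = C α * X ^ 2 + C e) : e = 0 := by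
  have hr0 : r ≠ 0 := by
    rintro rfl
    apply hα
    have := congrArg (fun p => Polynomial.coeff p 2) h
    simpa using this.symm
  have hdr : r.natDegree = 1 := by
    have h2 : (C α * X ^ 2 + C e : R[X]).natDegree = 2 := by
      rw [natDegree_add_C, natDegree_C_mul_X_pow 2 α hα]
    have := natDegree_mul hr0 hr0
    rw [h, h2] at this
    omega
  set b := r.coeff 1; set c := r.coeff 0
  have hr : r = C b * X + C c := eq_X_add_C_of_natDegree_le_one hdr.le
  rw [hr] at h
  have hexp : (C b * X + C c) * (C b * X + C c)
      = C (b * b) * X ^ 2 + C (b * c + c * b) * X + C (c * c) := by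
    simp only [C_mul, C_add]; ring
  rw [hexp] at h
  have h2 : b * b = α := by
    have := congrArg (fun p => Polynomial.coeff p 2) h
    simpa [mul_assoc, coeff_C_mul, coeff_X_pow] using this
  have h1 : b * c + c * b = 0 := by
    have := congrArg (fun p => Polynomial.coeff p 1) h
    simpa [mul_assoc, coeff_C_mul, coeff_X_pow] using this
  have h0 : c * c = e := by
    have := congrArg (fun p => Polynomial.coeff p 0) h
    simpa [mul_assoc, coeff_C_mul, coeff_X_pow] using this
  have hb : b ≠ 0 := fun hb => hα (by rw [← h2, hb, zero_mul])
  have hc : c = 0 := by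
    have : 2 * (b * c) = 0 := by linear_combination h1
    rcases mul_eq_zero.mp this with h' | h'
    · exact absurd h' htwo
    · rcases mul_eq_zero.mp h' with h'' | h''
      · exact absurd h'' hb
      · exact h''
  rw [← h0, hc, mul_zero]

end QuadAux

lemma quadfact {A : Type*} [CommRing A] (a α β w e : A) (h1 : a * α = -w) (h2 : a * β = -1) :
    Polynomial.C a * (Polynomial.C α * Polynomial.X ^ 2 + Polynomial.C (β * e))
      = -(Polynomial.C w * Polynomial.X ^ 2 + Polynomial.C e) := by
  rw [mul_add, ← mul_assoc, ← Polynomial.C_mul, h1, ← Polynomial.C_mul, ← mul_assoc, h2]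
  simp only [Polynomial.C_neg, neg_mul, one_mul, neg_add]


def vEquiv {m : ℕ} (i j : Fin m) (hij : i ≠ j) :
    (Fin m ⊕ Fin m) ≃ Option (Option (Fin m ⊕ {k : Fin m // k ≠ i ∧ k ≠ j})) where
  toFun := Sum.elim (fun q => some (some (Sum.inl q)))
    (fun k => if h : k = i then none else if h' : k = j then some none
      else some (some (Sum.inr ⟨k, h, h'⟩)))
  invFun := fun o => o.elim (Sum.inr i)
    (fun o' => o'.elim (Sum.inr j) (Sum.elim Sum.inl (fun k => Sum.inr k.1)))
  left_inv := by
    rintro (q | k)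
    · simp
    · by_cases h : k = i
      · subst h; simp
      · by_cases h' : k = j
        · subst h'; simp [h]
        · simp [h, h']
  right_inv := by
    rintro (_ | (_ | (q | k)))
    · simp
    · simp [hij.symm]
    · simp
    · simp [k.2.1, k.2.2]


open MvPolynomial

/-- If `m ≥ 2`, `V ≠ 0` and at least two of the `μᵢ` are nonzero, then
`H = (1/2)Σ μᵢ pᵢ² + V(q)` is irreducible in `ℂ[q,p]`. -/
theorem statement16 {m : ℕ} (hm : 2 ≤ m) (μ : Fin m → ℂ)
    (V : MvPolynomial (Fin m) ℂ) (hV0 : V ≠ 0)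
    (hμ : ∃ i j : Fin m, i ≠ j ∧ μ i ≠ 0 ∧ μ j ≠ 0) :
    Irreducible (ham μ V) := by
  classical
  obtain ⟨i, j, hij, hi, hj⟩ := hμ
  set σ₂ := (Fin m ⊕ {k : Fin m // k ≠ i ∧ k ≠ j}) with hσ₂
  set Φ : MvPolynomial (Fin m ⊕ Fin m) ℂ ≃ₐ[ℂ]
      Polynomial (Polynomial (MvPolynomial σ₂ ℂ)) :=
    (renameEquiv ℂ (vEquiv i j hij)).trans ((optionEquivLeft ℂ (Option σ₂)).trans
      (Polynomial.mapAlgEquiv (optionEquivLeft ℂ σ₂))) with hΦdef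
  -- basic computation facts
  have hXi : Φ (X (Sum.inr i)) = Polynomial.X := by
    simp [hΦdef, vEquiv, optionEquivLeft_X_none, Polynomial.coe_mapAlgEquiv]
  have hXj : Φ (X (Sum.inr j)) = Polynomial.C Polynomial.X := by
    simp [hΦdef, vEquiv, hij.symm, optionEquivLeft_X_some, optionEquivLeft_X_none,
      Polynomial.coe_mapAlgEquiv]
  have hXk : ∀ (k : Fin m) (h1 : k ≠ i) (h2 : k ≠ j),
      Φ (X (Sum.inr k)) = Polynomial.C (Polynomial.C (X (Sum.inr ⟨k, h1, h2⟩))) := by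
    intro k h1 h2
    simp [hΦdef, vEquiv, h1, h2, optionEquivLeft_X_some, Polynomial.coe_mapAlgEquiv]
  have hXq : ∀ q : Fin m,
      Φ (X (Sum.inl q)) = Polynomial.C (Polynomial.C (X (Sum.inl q))) := by
    intro q
    simp [hΦdef, vEquiv, optionEquivLeft_X_some, Polynomial.coe_mapAlgEquiv]
  have hCz : ∀ z : ℂ, Φ (C z) = Polynomial.C (Polynomial.C (C z)) := by
    intro z
    simp [hΦdef, vEquiv, optionEquivLeft_C, Polynomial.coe_mapAlgEquiv]
  have hV : Φ (rename Sum.inl V) = Polynomial.C (Polynomial.C (rename Sum.inl V)) := by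
    have hcomp : (Φ.toAlgHom.comp (rename (R := ℂ) Sum.inl)) =
        (Polynomial.CAlgHom.comp (Polynomial.CAlgHom.comp
          (rename (Sum.inl : Fin m → σ₂)))) := by
      apply MvPolynomial.algHom_ext
      intro q
      simp only [AlgHom.coe_comp, Function.comp_apply, rename_X, AlgEquiv.toAlgHom_eq_coe,
        AlgHom.coe_coe, Polynomial.CAlgHom_apply]
      exact hXq q
    have := DFunLike.congr_fun hcomp V
    simpa using this
  set u : ℂ := (1/2) * μ i with hu_def
  have hu : u ≠ 0 := mul_ne_zero (by norm_num) hi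
  set s : Finset (Fin m) := (Finset.univ.erase i).erase j with hs
  set T : MvPolynomial σ₂ ℂ := ∑ k ∈ s.attach,
      C (μ k.1) * X (Sum.inr ⟨k.1, (Finset.mem_erase.mp (Finset.mem_erase.mp k.2).2).1,
        (Finset.mem_erase.mp k.2).1⟩) ^ 2 with hT
  set e : MvPolynomial σ₂ ℂ := C (1/2) * T + rename Sum.inl V with he
  set D : Polynomial (MvPolynomial σ₂ ℂ) :=
    Polynomial.C (C ((1/2) * μ j)) * Polynomial.X ^ 2 + Polynomial.C e with hD
  have hsplit : (∑ k, C (μ k) * X (Sum.inr k) ^ 2 : MvPolynomial (Fin m ⊕ Fin m) ℂ)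
      = C (μ i) * X (Sum.inr i) ^ 2 + (C (μ j) * X (Sum.inr j) ^ 2
        + ∑ k ∈ s.attach, C (μ k.1) * X (Sum.inr k.1) ^ 2) := by
    have h1 := Finset.add_sum_erase Finset.univ
      (fun k => C (μ k) * X (Sum.inr k) ^ 2 : Fin m → MvPolynomial (Fin m ⊕ Fin m) ℂ)
      (Finset.mem_univ i)
    have h2 := Finset.add_sum_erase (Finset.univ.erase i)
      (fun k => C (μ k) * X (Sum.inr k) ^ 2 : Fin m → MvPolynomial (Fin m ⊕ Fin m) ℂ)
      (Finset.mem_erase.mpr ⟨hij.symm, Finset.mem_univ j⟩)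
    rw [Finset.sum_attach s (fun k => C (μ k) * X (Sum.inr k) ^ 2), hs, ← h1, ← h2]
  have hsum : Φ (∑ k ∈ s.attach, C (μ k.1) * X (Sum.inr k.1) ^ 2)
      = Polynomial.C (Polynomial.C T) := by
    rw [map_sum, hT, map_sum Polynomial.C, map_sum Polynomial.C]
    apply Finset.sum_congr rfl
    intro k _
    rw [map_mul, map_pow, hCz,
      hXk k.1 (Finset.mem_erase.mp (Finset.mem_erase.mp k.2).2).1 (Finset.mem_erase.mp k.2).1]
    simp only [← Polynomial.C_pow, ← Polynomial.C_mul]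
  have hΦham : Φ (ham μ V) = Polynomial.C (Polynomial.C (C u)) * Polynomial.X ^ 2
      + Polynomial.C D := by
    rw [ham, hsplit, map_add, map_mul, hCz, map_add, map_mul, map_pow, hCz, hXi,
      map_add, map_mul, map_pow, hCz, hXj, hsum, hV, hD, he]
    simp only [mul_add, ← mul_assoc, ← Polynomial.C_pow, ← Polynomial.C_mul,
      ← MvPolynomial.C_mul, ← Polynomial.C_add]
    rw [hu_def]
    ring_nf
    rw [add_assoc, ← Polynomial.C_add, add_assoc, ← Polynomial.C_add]
  set d : Polynomial (MvPolynomial σ₂ ℂ) :=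
    Polynomial.C (C (-u⁻¹ * ((1/2) * μ j))) * Polynomial.X ^ 2
      + Polynomial.C (C (-u⁻¹) * e) with hd
  have hA1 : (C u : MvPolynomial σ₂ ℂ) * C (-u⁻¹ * ((1/2) * μ j))
      = -(C ((1/2) * μ j)) := by
    rw [← MvPolynomial.C_mul, ← MvPolynomial.C_neg]
    congr 1
    field_simp
  have hA2 : (C u : MvPolynomial σ₂ ℂ) * C (-u⁻¹) = -1 := by
    rw [← MvPolynomial.C_mul, show u * -u⁻¹ = -1 by field_simp]
    simp
  have hCud : (Polynomial.C (C u) : Polynomial (MvPolynomial σ₂ ℂ)) * d = -D := by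
    rw [hd, hD]
    exact quadfact (C u) (C (-u⁻¹ * ((1/2) * μ j))) (C (-u⁻¹)) (C ((1/2) * μ j)) e hA1 hA2
  have hstep : Polynomial.C (Polynomial.C (C u)) * Polynomial.C d = -(Polynomial.C D) := by
    rw [← Polynomial.C_mul, hCud, Polynomial.C_neg]
  have hexpand : ∀ A B E : Polynomial (Polynomial (MvPolynomial σ₂ ℂ)),
      A * (B - E) = A * B - A * E := fun _ _ _ => by ring
  have hfact : Φ (ham μ V) = Polynomial.C (Polynomial.C (C u))
      * (Polynomial.X ^ 2 - Polynomial.C d) := by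
    rw [hΦham, hexpand, hstep]
    ring
  suffices hIr : Irreducible (Φ (ham μ V)) by
    exact (MulEquiv.irreducible_iff (Φ : MvPolynomial (Fin m ⊕ Fin m) ℂ ≃ₐ[ℂ] _)).mp hIr
  rw [hfact]
  have hunitCu : IsUnit (C u : MvPolynomial σ₂ ℂ) :=
    IsUnit.of_mul_eq_one (C u⁻¹) (by rw [← MvPolynomial.C_mul, mul_inv_cancel₀ hu, C_1])
  refine (irreducible_isUnit_mul ?_).mpr (quad_irred d ?_)
  · exact Polynomial.isUnit_C.mpr (Polynomial.isUnit_C.mpr hunitCu)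
  · intro r hr
    rw [hd] at hr
    have htwo : (2 : MvPolynomial σ₂ ℂ) ≠ 0 := by
      intro h
      have h2' : ((2:ℂ)) = 0 := by simpa [map_ofNat] using congrArg MvPolynomial.constantCoeff h
      norm_num at h2'
    have hα : (C (-u⁻¹ * ((1/2) * μ j)) : MvPolynomial σ₂ ℂ) ≠ 0 := by
      rw [Ne, MvPolynomial.C_eq_zero]
      exact mul_ne_zero (neg_ne_zero.mpr (inv_ne_zero hu))
        (mul_ne_zero (by norm_num) hj)
    have he0 : C (-u⁻¹) * e = 0 := sq_eq_quad htwo _ _ hα r hr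
    have he0' : e = 0 := by
      rcases mul_eq_zero.mp he0 with h | h
      · exact absurd h (MvPolynomial.C_eq_zero.not.mpr (neg_ne_zero.mpr (inv_ne_zero hu)))
      · exact h
    exfalso
    apply hV0
    have hev := congrArg (aeval (Sum.elim X (fun _ => (0 : MvPolynomial (Fin m) ℂ)))) he0'
    rw [he, hT] at hev
    simpa [aeval_rename, bind₁_rename, Sum.elim_comp_inl, bind₁_X_left] using hev
end
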